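/- arXiv:1605.07686 — 2 statements merged into one kernel-verified Lean document; each statement's English description precedes it below -/
import Mathlib

section
/- Let ε₁,...,εₙ be i.i.d. standard Gumbel random variables and a₁,...,aₙ ∈ ℝ. Then the random index argmax_i (a_i + ε_i) and the random value max_i (a_i + ε_i) are independent. -/
/-!
Write `Z = ∑ j, exp (a j)`. Conditionally on the winner `a i + ε i` taking the value `x`, the
event that `i` is the argmax is that every other `a j + ε j` lies below `x`, which by
independence has probability `∏ j ≠ i, exp (-exp (a j) * exp (-x))`. Gumbel CDFs with weights
multiply by adding the weights, so the density of the winner times this product is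
`exp (a i) / Z` times the Gumbel density with weight `Z`. Integrating up to `t` gives
`P(argmax = i, max ≤ t) = exp (a i) / Z * exp (-Z * exp (-t))`: the softmax weight of `i` times
the CDF of the max.
-/

open MeasureTheory Real Finset Set Filter Topology ProbabilityTheory

theorem integrableOn_Iic_deriv_of_nonneg {g g' : ℝ → ℝ} {a l : ℝ}
    (hderiv : ∀ x ∈ Iic a, HasDerivAt g (g' x) x) (g'pos : ∀ x ∈ Iio a, 0 ≤ g' x)
    (hg : Tendsto g atBot (𝓝 l)) : IntegrableOn g' (Iic a) := by
  have hrefl : IntegrableOn (fun x => -g' (-x)) (Ioi (-a)) := by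
    refine integrableOn_Ioi_deriv_of_nonpos' (g := fun x => g (-x)) (fun x hx => ?_)
      (fun x hx => neg_nonpos.mpr (g'pos (-x) (mem_Iio.mpr (neg_lt.mp hx))))
      (hg.comp tendsto_neg_atTop_atBot)
    have := (hderiv (-x) (mem_Iic.mpr (neg_le.mp hx))).comp x (hasDerivAt_neg' x)
    simpa [Function.comp_def] using this
  rw [integrableOn_Iic_iff_integrableOn_Iio, ← (Measure.measurePreserving_neg volume)
    |>.integrableOn_comp_preimage (Homeomorph.neg ℝ).measurableEmbedding]
  simpa [Function.comp_def] using hrefl.neg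

/-- The CDF of the Gumbel distribution with location `log w`. -/
noncomputable def gumbelCDF (w t : ℝ) : ℝ := exp (-(w * exp (-t)))

noncomputable def gumbelPDF (w x : ℝ) : ℝ := w * exp (-x) * gumbelCDF w x

theorem gumbelCDF_nonneg (w t : ℝ) : 0 ≤ gumbelCDF w t := (exp_pos _).le

theorem gumbelPDF_nonneg {w : ℝ} (hw : 0 ≤ w) (x : ℝ) : 0 ≤ gumbelPDF w x := by
  unfold gumbelPDF gumbelCDF; positivity

@[fun_prop]
theorem continuous_gumbelCDF (w : ℝ) : Continuous (gumbelCDF w) := by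
  unfold gumbelCDF; fun_prop

@[fun_prop]
theorem continuous_gumbelPDF (w : ℝ) : Continuous (gumbelPDF w) := by
  unfold gumbelPDF; fun_prop

theorem hasDerivAt_gumbelCDF (w x : ℝ) : HasDerivAt (gumbelCDF w) (gumbelPDF w x) x := by
  have h := ((hasDerivAt_neg' x).exp.const_mul w).neg
  simp only [Pi.neg_def, mul_neg, mul_one, neg_neg] at h
  exact h.exp.congr_deriv (by rw [gumbelPDF, gumbelCDF]; ring)

theorem tendsto_gumbelCDF_atBot {w : ℝ} (hw : 0 < w) : Tendsto (gumbelCDF w) atBot (𝓝 0) :=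
  tendsto_exp_atBot.comp <| tendsto_neg_atTop_atBot.comp <|
    (tendsto_exp_atTop.comp tendsto_neg_atBot_atTop).const_mul_atTop hw

theorem tendsto_gumbelCDF_atTop (w : ℝ) : Tendsto (gumbelCDF w) atTop (𝓝 1) := by
  show Tendsto (fun t => exp (-(w * exp (-t)))) atTop (𝓝 1)
  simpa using ((tendsto_exp_neg_atTop_nhds_zero.const_mul w).neg).rexp

theorem lintegral_Iic_gumbelPDF {w : ℝ} (hw : 0 < w) (t : ℝ) :
    ∫⁻ x in Iic t, ENNReal.ofReal (gumbelPDF w x) = ENNReal.ofReal (gumbelCDF w t) := by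
  have hint : IntegrableOn (gumbelPDF w) (Iic t) :=
    integrableOn_Iic_deriv_of_nonneg (fun x _ => hasDerivAt_gumbelCDF w x)
      (fun x _ => gumbelPDF_nonneg hw.le x) (tendsto_gumbelCDF_atBot hw)
  rw [← ofReal_integral_eq_lintegral_ofReal hint (ae_of_all _ (gumbelPDF_nonneg hw.le)),
    integral_Iic_of_hasDerivAt_of_tendsto' (fun x _ => hasDerivAt_gumbelCDF w x) hint
      (tendsto_gumbelCDF_atBot hw), sub_zero]

theorem prod_gumbelCDF {ι : Type*} (s : Finset ι) (w : ι → ℝ) (t : ℝ) :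
    ∏ j ∈ s, gumbelCDF (w j) t = gumbelCDF (∑ j ∈ s, w j) t := by
  simp only [gumbelCDF, ← exp_sum, sum_mul, sum_neg_distrib]

theorem gumbelCDF_exp (m t : ℝ) : gumbelCDF (exp m) t = exp (-exp (-(t - m))) := by
  rw [gumbelCDF, ← exp_add]; ring_nf

theorem gumbelPDF_mul_gumbelCDF {v u : ℝ} (h : v + u ≠ 0) (x : ℝ) :
    gumbelPDF v x * gumbelCDF u x = v / (v + u) * gumbelPDF (v + u) x := by
  simp only [gumbelPDF, gumbelCDF]
  field_simp
  rw [mul_assoc, ← exp_add]; ring_nf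

theorem eq_withDensity_gumbelPDF {ν : Measure ℝ} [IsFiniteMeasure ν] {w : ℝ} (hw : 0 < w)
    (h : ∀ t, ν (Iic t) = ENNReal.ofReal (gumbelCDF w t)) :
    ν = volume.withDensity fun x => ENNReal.ofReal (gumbelPDF w x) :=
  Measure.ext_of_Iic _ _ fun t => by
    rw [h, withDensity_apply _ measurableSet_Iic, lintegral_Iic_gumbelPDF hw]

theorem ProbabilityTheory.IndepFun.measure_preimage_eq_lintegral {Ω β γ : Type*}
    [MeasurableSpace Ω] {μ : Measure Ω} [IsFiniteMeasure μ] [MeasurableSpace β]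
    [MeasurableSpace γ] {X : Ω → β} {Y : Ω → γ} (h : IndepFun X Y μ) (hX : Measurable X)
    (hY : Measurable Y) {s : Set (β × γ)} (hs : MeasurableSet s) :
    μ ((fun ω => (X ω, Y ω)) ⁻¹' s) =
      ∫⁻ x, μ.map Y (Prod.mk x ⁻¹' s) ∂μ.map X := by
  rw [← Measure.map_apply (hX.prodMk hY) hs,
    h.map_prod_eq_prod_map_map hX.aemeasurable hY.aemeasurable, Measure.prod_apply hs]

section Independence

variable {Ω ι : Type*} [MeasurableSpace Ω] {μ : Measure Ω} {X : ι → Ω → ℝ}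

theorem ProbabilityTheory.iIndepFun.measure_forall_le (hX : iIndepFun X μ) (S : Finset ι)
    (t : ℝ) : μ {ω | ∀ j ∈ S, X j ω ≤ t} = ∏ j ∈ S, μ {ω | X j ω ≤ t} := by
  convert hX.measure_inter_preimage_eq_mul S (sets := fun _ => Iic t)
    (fun _ _ => measurableSet_Iic) using 2
  · ext ω; simp
  · rfl

theorem ProbabilityTheory.iIndepFun.measure_forall_le_self_and_le_eq_lintegral [Fintype ι]
    [DecidableEq ι] (hX : iIndepFun X μ) (hmeas : ∀ j, Measurable (X j)) (i : ι) (t : ℝ) :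
    μ {ω | (∀ j, X j ω ≤ X i ω) ∧ X i ω ≤ t} =
      ∫⁻ x in Iic t, ∏ j ∈ univ.erase i, μ {ω | X j ω ≤ x} ∂μ.map (X i) := by
  have := hX.isProbabilityMeasure
  set S := univ.erase i
  let Y : Ω → S → ℝ := fun ω j => X j ω
  have hY : Measurable Y := measurable_pi_lambda _ fun j => hmeas j
  have hXY : IndepFun (X i) Y μ := by
    have h := hX.indepFun_finset {i} S (by simp [S]) hmeas
    exact h.comp (measurable_pi_apply (⟨i, mem_singleton_self i⟩ : ({i} : Finset ι)))
      measurable_id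
  let s : Set (ℝ × (S → ℝ)) := {p | (∀ j, p.2 j ≤ p.1) ∧ p.1 ≤ t}
  have hs : MeasurableSet s := by
    simp only [s, ofPred_and, ofPred_forall]
    exact (MeasurableSet.iInter fun j => measurableSet_le (by fun_prop) (by fun_prop)).inter
      (measurableSet_le (by fun_prop) (by fun_prop))
  have hevent :
      {ω | (∀ j, X j ω ≤ X i ω) ∧ X i ω ≤ t} = (fun ω => (X i ω, Y ω)) ⁻¹' s := by
    ext ω
    simp only [s, Y, S, Set.mem_ofPred_eq, Set.mem_preimage, Subtype.forall, Finset.mem_erase,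
      Finset.mem_univ, and_true]
    refine and_congr_left fun _ => ⟨fun h j _ => h j, fun h j => ?_⟩
    by_cases hj : j = i
    · rw [hj]
    · exact h j hj
  have hslice (x : ℝ) : μ.map Y (Prod.mk x ⁻¹' s) =
      (Iic t).indicator (fun x => ∏ j ∈ S, μ {ω | X j ω ≤ x}) x := by
    by_cases hx : x ∈ Iic t
    · rw [indicator_of_mem hx, Measure.map_apply hY (measurable_prodMk_left hs),
        ← hX.measure_forall_le]
      congr 1
      ext ω
      simp [s, Y, mem_Iic.mp hx]
    · have : Prod.mk x ⁻¹' s = ∅ := by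
        ext y; simp [s, mem_Iic.not.mp hx]
      rw [indicator_of_notMem hx, this, measure_empty]
  rw [hevent, hXY.measure_preimage_eq_lintegral (hmeas i) hY hs,
    ← lintegral_indicator measurableSet_Iic]
  simp_rw [hslice]

end Independence

section Gumbel

variable {Ω ι : Type*} [MeasurableSpace Ω] {μ : Measure Ω} [Fintype ι] {X : ι → Ω → ℝ}
  {w : ι → ℝ}

theorem measure_forall_le_of_gumbelCDF (hX : iIndepFun X μ)
    (hcdf : ∀ j t, μ {ω | X j ω ≤ t} = ENNReal.ofReal (gumbelCDF (w j) t)) (t : ℝ) :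
    μ {ω | ∀ j, X j ω ≤ t} = ENNReal.ofReal (gumbelCDF (∑ j, w j) t) := by
  simpa [hcdf, ← ENNReal.ofReal_prod_of_nonneg, gumbelCDF_nonneg, prod_gumbelCDF] using
    hX.measure_forall_le univ t

theorem measure_forall_le_self_and_le_of_gumbelCDF [DecidableEq ι] (hX : iIndepFun X μ)
    (hmeas : ∀ j, Measurable (X j)) (hw : ∀ j, 0 < w j)
    (hcdf : ∀ j t, μ {ω | X j ω ≤ t} = ENNReal.ofReal (gumbelCDF (w j) t))
    (i : ι) (t : ℝ) :
    μ {ω | (∀ j, X j ω ≤ X i ω) ∧ X i ω ≤ t} =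
      ENNReal.ofReal (w i / ∑ j, w j) * ENNReal.ofReal (gumbelCDF (∑ j, w j) t) := by
  have := hX.isProbabilityMeasure
  have hW : 0 < ∑ j, w j := sum_pos (fun j _ => hw j) ⟨i, mem_univ i⟩
  have hlaw : μ.map (X i) = volume.withDensity fun x => ENNReal.ofReal (gumbelPDF (w i) x) :=
    eq_withDensity_gumbelPDF (hw i) fun t => by
      rw [Measure.map_apply (hmeas i) measurableSet_Iic]; exact hcdf i t
  have hdensity (x : ℝ) : ENNReal.ofReal (gumbelPDF (w i) x) *
      ∏ j ∈ univ.erase i, ENNReal.ofReal (gumbelCDF (w j) x) =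
        ENNReal.ofReal (w i / ∑ j, w j) * ENNReal.ofReal (gumbelPDF (∑ j, w j) x) := by
    rw [← ENNReal.ofReal_prod_of_nonneg fun j _ => gumbelCDF_nonneg _ _,
      ← ENNReal.ofReal_mul (gumbelPDF_nonneg (hw i).le x), prod_gumbelCDF,
      gumbelPDF_mul_gumbelCDF (by rw [add_sum_erase _ _ (mem_univ i)]; exact hW.ne'),
      add_sum_erase _ _ (mem_univ i), ENNReal.ofReal_mul (div_pos (hw i) hW).le]
  simp_rw [hX.measure_forall_le_self_and_le_eq_lintegral hmeas, hcdf, hlaw]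
  rw [setLIntegral_withDensity_eq_setLIntegral_mul _ (by fun_prop) (by fun_prop)
    measurableSet_Iic]
  simp_rw [Pi.mul_apply, hdensity]
  rw [lintegral_const_mul _ (by fun_prop), lintegral_Iic_gumbelPDF hW]

theorem measure_forall_le_self_of_gumbelCDF [DecidableEq ι] (hX : iIndepFun X μ)
    (hmeas : ∀ j, Measurable (X j)) (hw : ∀ j, 0 < w j)
    (hcdf : ∀ j t, μ {ω | X j ω ≤ t} = ENNReal.ofReal (gumbelCDF (w j) t)) (i : ι) :
    μ {ω | ∀ j, X j ω ≤ X i ω} = ENNReal.ofReal (w i / ∑ j, w j) := by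
  have hmono : Monotone fun t : ℝ => {ω | (∀ j, X j ω ≤ X i ω) ∧ X i ω ≤ t} :=
    fun s t hst ω hω => ⟨hω.1, hω.2.trans hst⟩
  have hunion : ⋃ t : ℝ, {ω | (∀ j, X j ω ≤ X i ω) ∧ X i ω ≤ t} =
      {ω | ∀ j, X j ω ≤ X i ω} := by
    ext ω; simpa using fun _ => ⟨X i ω, le_rfl⟩
  refine hunion ▸ tendsto_nhds_unique (tendsto_measure_iUnion_atTop hmono) ?_
  simp_rw [Function.comp_def, measure_forall_le_self_and_le_of_gumbelCDF hX hmeas hw hcdf]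
  simpa using ENNReal.Tendsto.const_mul
    (ENNReal.tendsto_ofReal (tendsto_gumbelCDF_atTop (∑ j, w j))) (Or.inr ENNReal.ofReal_ne_top)

end Gumbel

theorem gumbel_argmax_max_indep_general {n : ℕ} (hn : 0 < n)
    {Ω : Type*} [MeasurableSpace Ω] (μ : Measure Ω)
    (a : Fin n → ℝ) (ε : Fin n → Ω → ℝ) (hmeas : ∀ i, Measurable (ε i))
    (hindep : ProbabilityTheory.iIndepFun (m := fun _ => (inferInstance : MeasurableSpace ℝ)) ε μ)
    (hcdf : ∀ i t, μ {ω | ε i ω ≤ t} = ENNReal.ofReal (Real.exp (-Real.exp (-t))))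
    (i : Fin n) (t : ℝ) :
    μ ({ω | ∀ j, a j + ε j ω ≤ a i + ε i ω} ∩
        {ω | (Finset.univ.sup' (Finset.univ_nonempty_iff.mpr ⟨⟨0, hn⟩⟩)
          fun j => a j + ε j ω) ≤ t}) =
      μ {ω | ∀ j, a j + ε j ω ≤ a i + ε i ω} *
        μ {ω | (Finset.univ.sup' (Finset.univ_nonempty_iff.mpr ⟨⟨0, hn⟩⟩)
          fun j => a j + ε j ω) ≤ t} := by
  let X : Fin n → Ω → ℝ := fun j ω => a j + ε j ω
  have hX : iIndepFun X μ := hindep.comp (fun j x => a j + x) fun j => measurable_const_add (a j)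
  have hXmeas (j : Fin n) : Measurable (X j) := (hmeas j).const_add (a j)
  have hXcdf (j : Fin n) (s : ℝ) :
      μ {ω | X j ω ≤ s} = ENNReal.ofReal (gumbelCDF (exp (a j)) s) := by
    simp only [X, gumbelCDF_exp, ← hcdf j, le_sub_iff_add_le']
  have hmax :
      {ω | (univ.sup' (univ_nonempty_iff.mpr ⟨⟨0, hn⟩⟩) fun j => a j + ε j ω) ≤ t} =
        {ω | ∀ j, X j ω ≤ t} := by
    simp [X, sup'_le_iff]
  have hjoint : {ω | ∀ j, a j + ε j ω ≤ a i + ε i ω} ∩ {ω | ∀ j, X j ω ≤ t} =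
      {ω | (∀ j, X j ω ≤ X i ω) ∧ X i ω ≤ t} := by
    ext ω
    exact ⟨fun h => ⟨h.1, h.2 i⟩, fun h => ⟨h.1, fun j => (h.1 j).trans h.2⟩⟩
  have hw (j : Fin n) : 0 < exp (a j) := exp_pos _
  rw [hmax, hjoint, measure_forall_le_self_and_le_of_gumbelCDF hX hXmeas hw hXcdf,
    measure_forall_le_self_of_gumbelCDF hX hXmeas hw hXcdf,
    measure_forall_le_of_gumbelCDF hX hXcdf]

/-- **Independence of argmax and max for Gumbel perturbations.** If `ε i` are i.i.d.
standard Gumbel and `a i ∈ ℝ`, the random index `argmax_i (a i + ε i)` and the random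
value `max_i (a i + ε i)` are independent: the joint probability of the events
`{i is the argmax}` and `{max ≤ t}` factorizes for all `i` and `t`. -/
theorem gumbel_argmax_max_indep {n : ℕ} (hn : 0 < n)
    {Ω : Type*} [MeasurableSpace Ω] (μ : Measure Ω) [IsProbabilityMeasure μ]
    (a : Fin n → ℝ) (ε : Fin n → Ω → ℝ) (hmeas : ∀ i, Measurable (ε i))
    (hindep : ProbabilityTheory.iIndepFun (m := fun _ => (inferInstance : MeasurableSpace ℝ)) ε μ)
    (hcdf : ∀ i t, μ {ω | ε i ω ≤ t} = ENNReal.ofReal (Real.exp (-Real.exp (-t))))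
    (i : Fin n) (t : ℝ) :
    μ ({ω | ∀ j, a j + ε j ω ≤ a i + ε i ω} ∩
        {ω | (Finset.univ.sup' (Finset.univ_nonempty_iff.mpr ⟨⟨0, hn⟩⟩)
          fun j => a j + ε j ω) ≤ t}) =
      μ {ω | ∀ j, a j + ε j ω ≤ a i + ε i ω} *
        μ {ω | (Finset.univ.sup' (Finset.univ_nonempty_iff.mpr ⟨⟨0, hn⟩⟩)
          fun j => a j + ε j ω) ≤ t} :=
  gumbel_argmax_max_indep_general hn μ a ε hmeas hindep hcdf i t
end

section
/- Let Y be a finite product space, θ : Y → ℝ, and 𝓑 pairwise disjoint blocks with i.i.d. Gumbel perturbations per block. Since the perturbed potential ~θ always has at least one global maximizer, and any global maximizer is a block-coordinate-wise maximum, the random set Loc[~θ; 𝓑] of block-coordinate-wise maxima is almost surely nonempty; consequently Σ_{y∈Y} ∏_{β∈𝓑} p(y_β | y_{¬β}; θ) ≥ 1. -/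
/-!
Perturb-and-MAP. Attach to every block `β k` and every configuration `z` of it an independent
uniform variable `U k z` on `(0, 1]`; then `-log (-log (U k z))` is a Gumbel perturbation. A
global maximizer of the perturbed potential is a block-coordinate-wise maximum, so the events
"`y` is a block-wise maximum" cover the probability space. For fixed `y` these events are
independent across the (disjoint) blocks, and each is an exponential race won by `y_β` with
probability `p(y_β | y_¬β; θ)`. The union bound gives the claim.
-/

open Real Finset

/-- Replace the coordinates of `y` inside the block `B` by the values given by `z`. -/
def blockUpd {n : ℕ} {Y : Fin n → Type*} (B : Finset (Fin n)) (y : ∀ j, Y j)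
    (z : ∀ j : {j // j ∈ B}, Y j.1) : ∀ j, Y j :=
  fun j => if h : j ∈ B then z ⟨j, h⟩ else y j

open MeasureTheory Function

noncomputable def uniformUnitIoc : Measure ℝ := volume.restrict (Set.Ioc 0 1)

instance : IsProbabilityMeasure uniformUnitIoc := ⟨by simp [uniformUnitIoc]⟩

lemma ae_uniformUnitIoc_mem : ∀ᵐ t ∂uniformUnitIoc, t ∈ Set.Ioc 0 1 :=
  ae_restrict_mem measurableSet_Ioc

lemma uniformUnitIoc_Ioo : uniformUnitIoc (Set.Ioo 0 1) = 1 := by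
  rw [uniformUnitIoc, Measure.restrict_apply measurableSet_Ioo,
    Set.inter_eq_left.2 Set.Ioo_subset_Ioc_self]
  simp

lemma uniformUnitIoc_setOf_log_le {t c : ℝ} (ht : t ∈ Set.Ioc 0 1) (hc : 0 ≤ c) :
    uniformUnitIoc {x | log x ≤ c * log t} = ENNReal.ofReal (t ^ c) := by
  have htc : 0 < t ^ c := rpow_pos_of_pos ht.1 c
  have hsec : {x | log x ≤ c * log t} ∩ Set.Ioc 0 1 = Set.Ioc 0 (t ^ c) := by
    ext x
    simp only [Set.mem_inter_iff, Set.mem_ofPred_eq, Set.mem_Ioc, ← log_rpow ht.1]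
    constructor
    · rintro ⟨hle, hx, -⟩
      exact ⟨hx, (log_le_log_iff hx htc).1 hle⟩
    · rintro ⟨hx, hle⟩
      exact ⟨log_le_log hx hle, hx, hle.trans (rpow_le_one ht.1.le ht.2 hc)⟩
  rw [uniformUnitIoc, Measure.restrict_apply' measurableSet_Ioc, hsec, volume_Ioc, sub_zero]

lemma lintegral_uniformUnitIoc_rpow {S : ℝ} (hS : -1 < S) :
    ∫⁻ t, ENNReal.ofReal (t ^ S) ∂uniformUnitIoc = ENNReal.ofReal (1 / (S + 1)) := by
  have hint : IntegrableOn (fun t : ℝ => t ^ S) (Set.Ioc 0 1) :=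
    (intervalIntegrable_iff_integrableOn_Ioc_of_le zero_le_one).1
      (intervalIntegral.intervalIntegrable_rpow' hS)
  rw [uniformUnitIoc, ← ofReal_integral_eq_lintegral_ofReal hint
    (ae_restrict_of_forall_mem measurableSet_Ioc fun t ht => rpow_nonneg ht.1.le S),
    ← intervalIntegral.integral_of_le zero_le_one,
    integral_rpow (Or.inl hS), one_rpow, zero_rpow (by linarith), sub_zero]

lemma measure_pi_setOf_log_le {κ : Type*} [Fintype κ] {t : ℝ} (ht : t ∈ Set.Ioc 0 1)
    {c : κ → ℝ} (hc : ∀ j, 0 ≤ c j) :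
    (Measure.pi fun _ : κ => uniformUnitIoc) {v | ∀ j, log (v j) ≤ c j * log t}
      = ENNReal.ofReal (t ^ ∑ j, c j) := by
  have hbox : {v : κ → ℝ | ∀ j, log (v j) ≤ c j * log t}
      = Set.univ.pi fun j => {x | log x ≤ c j * log t} := by
    ext v; simp
  rw [hbox, Measure.pi_pi, rpow_sum_of_pos ht.1,
    ENNReal.ofReal_prod_of_nonneg fun j _ => (rpow_pos_of_pos ht.1 _).le]
  exact Finset.prod_congr rfl fun j _ => uniformUnitIoc_setOf_log_le ht (hc j)

/-- `-log (u i) / b i` are independent exponential variables of rates `b i`; this is the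
probability that `i₀` wins their race. -/
theorem measure_pi_race {ι : Type*} [Fintype ι] (b : ι → ℝ) (hb : ∀ i, 0 < b i) (i₀ : ι) :
    (Measure.pi fun _ : ι => uniformUnitIoc) {u | ∀ i, log (u i) / b i ≤ log (u i₀) / b i₀}
      = ENNReal.ofReal (b i₀ / ∑ i, b i) := by
  classical
  set c : {i // ¬i = i₀} → ℝ := fun j => b j / b i₀
  have hc : ∀ j, 0 ≤ c j := fun j => (div_pos (hb j) (hb i₀)).le
  have hwin : ∀ i x t, log x / b i ≤ log t / b i₀ ↔ log x ≤ b i / b i₀ * log t := fun i x t => by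
    rw [div_le_iff₀ (hb i)]
    congr! 1
    ring
  set B : Set (ℝ × ({i // ¬i = i₀} → ℝ)) := {p | ∀ j, log (p.2 j) ≤ c j * log p.1}
  have hB : MeasurableSet B := by
    simp only [B, Set.ofPred_forall]
    exact .iInter fun j => measurableSet_le (measurable_log.comp ((measurable_pi_apply j).comp
      measurable_snd)) (measurable_const.mul (measurable_log.comp measurable_fst))
  let e := Prod.map (MeasurableEquiv.funUnique {i // i = i₀} ℝ) id ∘
    MeasurableEquiv.piEquivPiSubtypeProd (fun _ : ι => ℝ) (· = i₀)
  have he : MeasurePreserving e (Measure.pi fun _ : ι => uniformUnitIoc)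
      (uniformUnitIoc.prod (Measure.pi fun _ : {i // ¬i = i₀} => uniformUnitIoc)) := by
    refine ((measurePreserving_funUnique _ _).prod (.id _)).comp ?_
    convert measurePreserving_piEquivPiSubtypeProd (fun _ => uniformUnitIoc) (· = i₀)
  have hpre : {u : ι → ℝ | ∀ i, log (u i) / b i ≤ log (u i₀) / b i₀} = e ⁻¹' B := by
    ext u
    simp only [Set.mem_ofPred_eq, Set.mem_preimage, B, hwin, c]
    refine ⟨fun h j => h j, fun h i => ?_⟩
    by_cases hi : i = i₀
    · rw [hi, div_self (hb i₀).ne', one_mul]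
    · exact h ⟨i, hi⟩
  have hS : 1 / (∑ j, c j + 1) = b i₀ / ∑ i, b i := by
    have hb₀ := (hb i₀).ne'
    rw [Fintype.sum_eq_add_sum_subtype_ne b i₀, ← Finset.sum_div]
    field_simp
    ring
  rw [hpre, he.measure_preimage hB.nullMeasurableSet, Measure.prod_apply hB, ← hS,
    ← lintegral_uniformUnitIoc_rpow (by linarith [Finset.sum_nonneg fun j (_ : j ∈ univ) => hc j])]
  refine lintegral_congr_ae (ae_uniformUnitIoc_mem.mono fun t ht => ?_)
  exact measure_pi_setOf_log_le ht hc

section Blocks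

variable {n : ℕ} {Y : Fin n → Type*}

lemma blockUpd_restrict_self (B : Finset (Fin n)) (y : ∀ j, Y j) :
    blockUpd B y (B.restrict y) = y := by
  funext j
  by_cases hj : j ∈ B <;> simp [blockUpd, hj]

lemma restrict_blockUpd_self (B : Finset (Fin n)) (y : ∀ j, Y j) (z : ∀ j : B, Y j) :
    B.restrict (blockUpd B y z) = z := by
  funext j
  simp [blockUpd, j.2]

lemma restrict_blockUpd_of_disjoint {B C : Finset (Fin n)} (h : Disjoint C B) (y : ∀ j, Y j)
    (z : ∀ j : B, Y j) : C.restrict (blockUpd B y z) = C.restrict y := by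
  funext j
  simp [blockUpd, Finset.disjoint_left.1 h j.2]

lemma blockUpd_add_le_of_forall_add_sum_le {κ : Type*} [Fintype κ] {β : κ → Finset (Fin n)}
    (hβ : Pairwise (Disjoint on β)) (θ : (∀ j, Y j) → ℝ) (g : ∀ k, (∀ j : β k, Y j) → ℝ)
    {y : ∀ j, Y j}
    (hy : ∀ y', θ y' + ∑ k, g k ((β k).restrict y') ≤ θ y + ∑ k, g k ((β k).restrict y))
    (k : κ) (w : ∀ j : β k, Y j) :
    θ (blockUpd (β k) y w) + g k w ≤ θ y + g k ((β k).restrict y) := by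
  classical
  have hrest : ∑ l ∈ univ.erase k, g l ((β l).restrict (blockUpd (β k) y w))
      = ∑ l ∈ univ.erase k, g l ((β l).restrict y) :=
    Finset.sum_congr rfl fun l hl => by
      rw [restrict_blockUpd_of_disjoint (hβ (Finset.ne_of_mem_erase hl))]
  have := hy (blockUpd (β k) y w)
  rw [← Finset.add_sum_erase _ _ (mem_univ k), ← Finset.add_sum_erase _ _ (mem_univ k), hrest,
    restrict_blockUpd_self] at this
  linarith

lemma log_div_exp_le_of_sub_log_neg_log_le {u v a b : ℝ} (hu : u ∈ Set.Ioo 0 1)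
    (hv : v ∈ Set.Ioo 0 1) (h : a - log (-log u) ≤ b - log (-log v)) :
    log u / exp a ≤ log v / exp b := by
  have hexp : ∀ x ∈ Set.Ioo (0 : ℝ) 1, ∀ c, log x / exp c = -exp (log (-log x) - c) := by
    intro x hx c
    rw [exp_sub, exp_log (neg_pos.2 (log_neg hx.1 hx.2)), neg_div, neg_neg]
  rw [hexp u hu, hexp v hv, neg_le_neg_iff, exp_le_exp]
  linarith

lemma exists_forall_log_div_exp_blockUpd_le [∀ j, Finite (Y j)] [∀ j, Nonempty (Y j)]
    {κ : Type*} [Fintype κ] {β : κ → Finset (Fin n)} (hβ : Pairwise (Disjoint on β))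
    (θ : (∀ j, Y j) → ℝ) (ω : ∀ k, (∀ j : β k, Y j) → ℝ) (hω : ∀ k z, ω k z ∈ Set.Ioo 0 1) :
    ∃ y, ∀ k w, log (ω k w) / exp (θ (blockUpd (β k) y w))
      ≤ log (ω k ((β k).restrict y)) / exp (θ y) := by
  obtain ⟨y, hy⟩ := Finite.exists_max fun y : ∀ j, Y j =>
    θ y + ∑ k, -log (-log (ω k ((β k).restrict y)))
  refine ⟨y, fun k w => log_div_exp_le_of_sub_log_neg_log_le (hω k w) (hω k _) ?_⟩
  linarith [blockUpd_add_le_of_forall_add_sum_le hβ θ (fun k z => -log (-log (ω k z))) hy k w]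

lemma measure_pi_setOf_forall_log_div_exp_blockUpd_le [∀ j, Fintype (Y j)]
    (θ : (∀ j, Y j) → ℝ) (B : Finset (Fin n)) (y : ∀ j, Y j) :
    (Measure.pi fun _ : (∀ j : B, Y j) => uniformUnitIoc)
      {u | ∀ w, log (u w) / exp (θ (blockUpd B y w)) ≤ log (u (B.restrict y)) / exp (θ y)}
      = ENNReal.ofReal (exp (θ y) / ∑ z, exp (θ (blockUpd B y z))) := by
  have := measure_pi_race (fun w => exp (θ (blockUpd B y w))) (fun _ => exp_pos _) (B.restrict y)
  rwa [blockUpd_restrict_self] at this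

end Blocks

theorem sum_composite_likelihood_ge_one_general {n m : ℕ} {Y : Fin n → Type*}
    [∀ j, Fintype (Y j)] [∀ j, Nonempty (Y j)]
    (θ : (∀ j, Y j) → ℝ)
    (β : Fin m → Finset (Fin n))
    (hdisj : ∀ k l, k ≠ l → Disjoint (β k) (β l)) :
    1 ≤ ∑ y : ∀ j, Y j, ∏ k, (Real.exp (θ y) /
        ∑ z : (j : {j // j ∈ β k}) → Y j.1, Real.exp (θ (blockUpd (β k) y z))) := by
  set μ := Measure.pi fun k => Measure.pi fun _ : (∀ j : β k, Y j) => uniformUnitIoc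
  set win : ∀ k, (∀ j, Y j) → Set ((∀ j : β k, Y j) → ℝ) := fun k y =>
    {u | ∀ w, log (u w) / exp (θ (blockUpd (β k) y w)) ≤ log (u ((β k).restrict y)) / exp (θ y)}
  have hcover : (Set.univ.pi fun k => Set.univ.pi fun _ => Set.Ioo 0 1)
      ⊆ ⋃ y, Set.univ.pi fun k => win k y := by
    intro ω hω
    obtain ⟨y, hy⟩ := exists_forall_log_div_exp_blockUpd_le (fun k l => hdisj k l) θ ω
      fun k z => hω k trivial z trivial
    exact Set.mem_iUnion.2 ⟨y, fun k _ => hy k⟩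
  have hp : ∀ y k, 0 ≤ exp (θ y) / ∑ z : (∀ j : β k, Y j), exp (θ (blockUpd (β k) y z)) :=
    fun _ _ => by positivity
  rw [← ENNReal.one_le_ofReal, ENNReal.ofReal_sum_of_nonneg fun y _ =>
    prod_nonneg fun k _ => hp y k]
  calc 1 = μ (Set.univ.pi fun k => Set.univ.pi fun _ => Set.Ioo 0 1) := by
        simp [μ, Measure.pi_pi, uniformUnitIoc_Ioo]
    _ ≤ μ (⋃ y, Set.univ.pi fun k => win k y) := measure_mono hcover
    _ ≤ ∑ y, μ (Set.univ.pi fun k => win k y) := measure_iUnion_fintype_le _ _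
    _ = _ := by
      simp only [μ, win, Measure.pi_pi, measure_pi_setOf_forall_log_div_exp_blockUpd_le]
      exact Finset.sum_congr rfl fun y _ => (ENNReal.ofReal_prod_of_nonneg fun k _ => hp y k).symm

/-- **The composite likelihood normalizer is at least one.** Since the set of
block-coordinate-wise maxima of the perturbed potential is always nonempty (any global
maximizer belongs to it), the sum over all configurations of the composite likelihood
`∏ k, p(y_{β k} | y_{¬β k}; θ)` is at least `1`. -/
theorem sum_composite_likelihood_ge_one {n m : ℕ} {Y : Fin n → Type*}
    [∀ j, Fintype (Y j)] [∀ j, Nonempty (Y j)] [∀ j, DecidableEq (Y j)]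
    (θ : (∀ j, Y j) → ℝ)
    (β : Fin m → Finset (Fin n))
    (hdisj : ∀ k l, k ≠ l → Disjoint (β k) (β l)) :
    1 ≤ ∑ y : ∀ j, Y j, ∏ k, (Real.exp (θ y) /
        ∑ z : (j : {j // j ∈ β k}) → Y j.1, Real.exp (θ (blockUpd (β k) y z))) :=
  sum_composite_likelihood_ge_one_general θ β hdisj
end
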